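/- For a bounded linear operator T on a complex Hilbert space H and α ∈ [0,1], the α-norm satisfies max{1/2, √(1−α)}·‖T‖ ≤ ‖T‖_α ≤ ‖T‖, where ‖T‖ is the operator norm. -/

import Mathlib

open scoped Matrix

/-- The `α`-norm of a bounded operator `T`:
`‖T‖_α = sup {√(α|⟨Tx,x⟩|² + (1-α)‖Tx‖²) : ‖x‖ = 1}`. -/
noncomputable def alphaNorm {H : Type*} [NormedAddCommGroup H] [InnerProductSpace ℂ H]
    (α : ℝ) (T : H →L[ℂ] H) : ℝ :=
  sSup {r : ℝ | ∃ x : H, ‖x‖ = 1 ∧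
    r = Real.sqrt (α * ‖(inner ℂ (T x) x : ℂ)‖ ^ 2 + (1 - α) * ‖T x‖ ^ 2)}

/-- The numerical radius `w(T) = sup {|⟨Tx,x⟩| : ‖x‖ = 1}`. -/
noncomputable def numRadius {H : Type*} [NormedAddCommGroup H] [InnerProductSpace ℂ H]
    (T : H →L[ℂ] H) : ℝ :=
  sSup {r : ℝ | ∃ x : H, ‖x‖ = 1 ∧ r = ‖(inner ℂ (T x) x : ℂ)‖}

/-! For a unit vector `x` we have `|⟪T x, x⟫| ≤ ‖T x‖`, so each quantity
`√(α |⟪T x, x⟫|² + (1 - α) ‖T x‖²)` lies between `max (|⟪T x, x⟫|, √(1 - α) ‖T x‖)` and `‖T x‖`.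
Taking suprema gives `‖T‖_α ≤ ‖T‖`, `w(T) ≤ ‖T‖_α` and `√(1 - α) ‖T‖ ≤ ‖T‖_α`. The remaining bound
`‖T‖ ≤ 2 w(T)` comes from the complex polarization identity for `⟪T x, y⟫` combined with the
parallelogram law. -/

open scoped InnerProductSpace

section Polarization

theorem norm_inner_map_le_of_norm_inner_map_self_le {V : Type*} [SeminormedAddCommGroup V]
    [InnerProductSpace ℂ V] (T : V →ₗ[ℂ] V) {M : ℝ}
    (hq : ∀ z, ‖⟪T z, z⟫_ℂ‖ ≤ M * ‖z‖ ^ 2) (x y : V) :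
    ‖⟪T x, y⟫_ℂ‖ ≤ M * (‖x‖ ^ 2 + ‖y‖ ^ 2) := by
  have hpar := parallelogram_law_with_norm ℂ x y
  have hpar_I := parallelogram_law_with_norm ℂ x (Complex.I • y)
  rw [norm_smul, Complex.norm_I, one_mul] at hpar_I
  have h4 : 4 * ‖⟪T x, y⟫_ℂ‖ ≤ ‖⟪T (x + y), x + y⟫_ℂ‖ + ‖⟪T (x - y), x - y⟫_ℂ‖ +
      ‖⟪T (x + Complex.I • y), x + Complex.I • y⟫_ℂ‖ +
      ‖⟪T (x - Complex.I • y), x - Complex.I • y⟫_ℂ‖ := by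
    rw [inner_map_polarization' T x y, norm_div, RCLike.norm_ofNat, mul_div_cancel₀ _ four_ne_zero]
    refine (norm_add_le _ _).trans (add_le_add ((norm_sub_le _ _).trans
      (add_le_add (norm_sub_le _ _) ?_)) ?_) <;> rw [norm_mul, Complex.norm_I, one_mul]
  have h4M : 4 * ‖⟪T x, y⟫_ℂ‖ ≤ M * ((‖x + y‖ ^ 2 + ‖x - y‖ ^ 2) +
      (‖x + Complex.I • y‖ ^ 2 + ‖x - Complex.I • y‖ ^ 2)) := by
    linarith [hq (x + y), hq (x - y), hq (x + Complex.I • y), hq (x - Complex.I • y)]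
  rw [hpar, hpar_I] at h4M
  linarith

variable {V : Type*} [NormedAddCommGroup V] [InnerProductSpace ℂ V]

theorem norm_inner_map_self_le_of_forall_norm_eq_one (T : V →ₗ[ℂ] V) {M : ℝ}
    (h : ∀ x, ‖x‖ = 1 → ‖⟪T x, x⟫_ℂ‖ ≤ M) (z : V) : ‖⟪T z, z⟫_ℂ‖ ≤ M * ‖z‖ ^ 2 := by
  rcases eq_or_ne z 0 with rfl | hz
  · simp
  have hz' : (‖z‖ : ℂ) ≠ 0 := by exact_mod_cast norm_ne_zero_iff.mpr hz
  have hu : ‖(‖z‖⁻¹ : ℂ) • z‖ = 1 := by simp [norm_smul, norm_ne_zero_iff.mpr hz]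
  have hscale : ⟪T z, z⟫_ℂ = (‖z‖ : ℂ) ^ 2 * ⟪T ((‖z‖⁻¹ : ℂ) • z), (‖z‖⁻¹ : ℂ) • z⟫_ℂ := by
    simp only [map_smul, inner_smul_left, inner_smul_right, map_inv₀, Complex.conj_ofReal]
    field_simp
  rw [hscale, norm_mul, norm_pow, Complex.norm_real, norm_norm, mul_comm]
  exact mul_le_mul_of_nonneg_right (h _ hu) (by positivity)

theorem ContinuousLinearMap.opNorm_le_two_mul_of_norm_inner_self_le (T : V →L[ℂ] V) {M : ℝ}
    (hM : 0 ≤ M) (h : ∀ x, ‖x‖ = 1 → ‖⟪T x, x⟫_ℂ‖ ≤ M) : ‖T‖ ≤ 2 * M := by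
  have hq := norm_inner_map_self_le_of_forall_norm_eq_one (T : V →ₗ[ℂ] V) h
  refine T.opNorm_le_of_unit_norm (by positivity) fun x hx => ?_
  rcases eq_or_ne (T x) 0 with hTx | hTx
  · rw [hTx, norm_zero]; positivity
  -- pair `T x` against the unit vector in its own direction
  set y := (‖T x‖⁻¹ : ℂ) • T x
  have hy : ‖y‖ = 1 := by simp [y, norm_smul, norm_ne_zero_iff.mpr hTx]
  have hxy : ‖⟪T x, y⟫_ℂ‖ = ‖T x‖ := by
    simp [y, inner_self_eq_norm_sq_to_K, norm_ne_zero_iff.mpr hTx, sq]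
  have := norm_inner_map_le_of_norm_inner_map_self_le (T : V →ₗ[ℂ] V) hq x y
  simp only [ContinuousLinearMap.coe_coe, hxy, hx, hy] at this
  linarith

end Polarization

section NumericalRadius

variable {H : Type*} [NormedAddCommGroup H] [InnerProductSpace ℂ H]

theorem norm_inner_apply_self_le_norm_apply (T : H →L[ℂ] H) {x : H} (hx : ‖x‖ = 1) :
    ‖⟪T x, x⟫_ℂ‖ ≤ ‖T x‖ := by
  simpa [hx] using norm_inner_le_norm (𝕜 := ℂ) (T x) x

theorem numRadius_nonneg (T : H →L[ℂ] H) : 0 ≤ numRadius T :=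
  Real.sSup_nonneg fun _ ⟨_, _, hr⟩ => hr ▸ norm_nonneg _

theorem norm_inner_self_le_numRadius (T : H →L[ℂ] H) {x : H} (hx : ‖x‖ = 1) :
    ‖⟪T x, x⟫_ℂ‖ ≤ numRadius T := by
  refine le_csSup ⟨‖T‖, ?_⟩ ⟨x, hx, rfl⟩
  rintro _ ⟨y, hy, rfl⟩
  exact (norm_inner_apply_self_le_norm_apply T hy).trans (by simpa [hy] using T.le_opNorm y)

theorem opNorm_le_two_mul_numRadius (T : H →L[ℂ] H) : ‖T‖ ≤ 2 * numRadius T :=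
  T.opNorm_le_two_mul_of_norm_inner_self_le (numRadius_nonneg T)
    fun _ hx => norm_inner_self_le_numRadius T hx

end NumericalRadius

section AlphaNorm

variable {H : Type*} [NormedAddCommGroup H] [InnerProductSpace ℂ H] {α : ℝ}

theorem alphaNorm_nonneg (T : H →L[ℂ] H) : 0 ≤ alphaNorm α T :=
  Real.sSup_nonneg fun _ ⟨_, _, hr⟩ => hr ▸ Real.sqrt_nonneg _

theorem sqrt_alpha_combination_le_norm_apply (hα0 : 0 ≤ α) (T : H →L[ℂ] H) {x : H}
    (hx : ‖x‖ = 1) :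
    √(α * ‖⟪T x, x⟫_ℂ‖ ^ 2 + (1 - α) * ‖T x‖ ^ 2) ≤ ‖T x‖ := by
  have := norm_inner_apply_self_le_norm_apply T hx
  refine Real.sqrt_le_iff.mpr ⟨norm_nonneg _, ?_⟩
  nlinarith [pow_le_pow_left₀ (norm_nonneg _) this 2]

theorem alphaNorm_le_opNorm (hα0 : 0 ≤ α) (T : H →L[ℂ] H) : alphaNorm α T ≤ ‖T‖ := by
  refine Real.sSup_le ?_ (norm_nonneg T)
  rintro _ ⟨x, hx, rfl⟩
  exact (sqrt_alpha_combination_le_norm_apply hα0 T hx).trans (by simpa [hx] using T.le_opNorm x)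

theorem sqrt_alpha_combination_le_alphaNorm (hα0 : 0 ≤ α) (T : H →L[ℂ] H) {x : H}
    (hx : ‖x‖ = 1) :
    √(α * ‖⟪T x, x⟫_ℂ‖ ^ 2 + (1 - α) * ‖T x‖ ^ 2) ≤ alphaNorm α T := by
  refine le_csSup ⟨‖T‖, ?_⟩ ⟨x, hx, rfl⟩
  rintro _ ⟨y, hy, rfl⟩
  exact (sqrt_alpha_combination_le_norm_apply hα0 T hy).trans (by simpa [hy] using T.le_opNorm y)

theorem numRadius_le_alphaNorm (hα0 : 0 ≤ α) (hα1 : α ≤ 1) (T : H →L[ℂ] H) :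
    numRadius T ≤ alphaNorm α T := by
  refine Real.sSup_le ?_ (alphaNorm_nonneg T)
  rintro _ ⟨x, hx, rfl⟩
  refine (Real.le_sqrt_of_sq_le ?_).trans (sqrt_alpha_combination_le_alphaNorm hα0 T hx)
  have := norm_inner_apply_self_le_norm_apply T hx
  nlinarith [pow_le_pow_left₀ (norm_nonneg _) this 2]

theorem sqrt_one_sub_mul_opNorm_le_alphaNorm (hα0 : 0 ≤ α) (hα1 : α ≤ 1) (T : H →L[ℂ] H) :
    √(1 - α) * ‖T‖ ≤ alphaNorm α T := by
  have hnorm : ‖(√(1 - α) : ℂ)‖ = √(1 - α) := by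
    rw [Complex.norm_real, Real.norm_of_nonneg (Real.sqrt_nonneg _)]
  rw [← hnorm, ← norm_smul]
  refine ContinuousLinearMap.opNorm_le_of_unit_norm (alphaNorm_nonneg T) fun x hx => ?_
  rw [smul_apply, norm_smul, hnorm]
  refine (Real.le_sqrt_of_sq_le ?_).trans (sqrt_alpha_combination_le_alphaNorm hα0 T hx)
  rw [mul_pow, Real.sq_sqrt (sub_nonneg.mpr hα1)]
  nlinarith [sq_nonneg ‖⟪T x, x⟫_ℂ‖]

end AlphaNorm

/-- For `α ∈ [0,1]`, `max{1/2, √(1-α)}·‖T‖ ≤ ‖T‖_α ≤ ‖T‖`. -/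
theorem alphaNorm_opNorm_bounds {H : Type*} [NormedAddCommGroup H] [InnerProductSpace ℂ H]
    (α : ℝ) (hα0 : 0 ≤ α) (hα1 : α ≤ 1) (T : H →L[ℂ] H) :
    max (1 / 2) (Real.sqrt (1 - α)) * ‖T‖ ≤ alphaNorm α T ∧ alphaNorm α T ≤ ‖T‖ := by
  refine ⟨?_, alphaNorm_le_opNorm hα0 T⟩
  rw [max_mul_of_nonneg _ _ (norm_nonneg T)]
  refine max_le ?_ (sqrt_one_sub_mul_opNorm_le_alphaNorm hα0 hα1 T)
  linarith [opNorm_le_two_mul_numRadius T, numRadius_le_alphaNorm hα0 hα1 T]
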